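/- arXiv:1904.09690 — 2 statements merged into one kernel-verified Lean document; each statement's English description precedes it below -/
import Mathlib

section
/- For any two strings x and y, there exists an optimal correspondence between x and y such that either the final run of x is not extended or the final run of y is not extended. -/
open scoped BigOperators

variable {α : Type*}

/-- `xb` is the expansion of `x` obtained by replacing the `i`-th letter of `x`
with `ks[i] ≥ 1` consecutive copies of itself (equivalently, by extending runs). -/
def IsExpansionWith (x : List α) (ks : List ℕ) (xb : List α) : Prop :=
  ks.length = x.length ∧ (∀ k ∈ ks, 1 ≤ k) ∧
    xb = (x.zip ks).flatMap fun p => List.replicate p.2 p.1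

/-- `xb` is an expansion of `x` (obtained by extending runs). -/
def IsExpansion (x xb : List α) : Prop := ∃ ks, IsExpansionWith x ks xb

/-- The cost of a correspondence: sum of pointwise distances. -/
def corrCost (d : α → α → ℝ) (xb yb : List α) : ℝ :=
  ((xb.zip yb).map fun p => d p.1 p.2).sum

/-- A correspondence between `x` and `y`: a pair of equal-length expansions. -/
def IsCorrespondence (x y xb yb : List α) : Prop :=
  IsExpansion x xb ∧ IsExpansion y yb ∧ xb.length = yb.length

/-- Dynamic time warping distance: minimum cost of a correspondence. -/
noncomputable def dtw (d : α → α → ℝ) (x y : List α) : ℝ :=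
  sInf {c | ∃ xb yb, IsCorrespondence x y xb yb ∧ c = corrCost d xb yb}

/-- The maximal runs of equal letters of a list. -/
def runsOf [DecidableEq α] (x : List α) : List (List α) := x.splitBy (· == ·)

/-- Number of runs. -/
def numRuns [DecidableEq α] (x : List α) : ℕ := (runsOf x).length

/-- Length of the final run. -/
def lastRunLen [DecidableEq α] (x : List α) : ℕ := ((runsOf x).getLastD []).length

/-- Length of the `i`-th run (0-indexed). -/
def runLen [DecidableEq α] (x : List α) (i : ℕ) : ℕ := ((runsOf x).getD i []).length

/-- The letter populating the `i`-th run (0-indexed). -/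
def runLetter [DecidableEq α] [Inhabited α] (x : List α) (i : ℕ) : α :=
  ((runsOf x).getD i []).headI

/-- The concatenation of the first `k` runs of `x`. -/
def firstRuns [DecidableEq α] (k : ℕ) (x : List α) : List α := ((runsOf x).take k).flatten

/-- The prefix of `y` consisting of its first `ry` runs, up through the `oy`-th
letter of the `ry`-th run (runs are 1-indexed here). -/
def runPrefix [DecidableEq α] (ry oy : ℕ) (y : List α) : List α :=
  firstRuns (ry - 1) y ++ ((runsOf y).getD (ry - 1) []).take oy

/-- The subproblem `SP(x, y, rx, ry, oy)`: the minimum cost of a correspondence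
between the first `rx` runs of `x` and the prefix of `y` ending at the `oy`-th
letter of its `ry`-th run, under the constraint that the final (`ry`-th) run of
the `y`-prefix is not extended; `⊤` if no such correspondence exists. -/
noncomputable def SP [DecidableEq α] (d : α → α → ℝ) (x y : List α) (rx ry oy : ℕ) : EReal :=
  sInf ((fun p : List α × List α => ((corrCost d p.1 p.2 : ℝ) : EReal)) ''
    {p | IsCorrespondence (firstRuns rx x) (runPrefix ry oy y) p.1 p.2 ∧
         (0 < oy → lastRunLen p.2 = oy)})

/-- Generalized edit distance over a metric with null character `nul`:
insertion/deletion of `l` costs `d nul l`, substitution of `l` by `l'` costs `d l l'`. -/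
noncomputable def ged (d : α → α → ℝ) (nul : α) : List α → List α → ℝ
  | [], [] => 0
  | [], b :: ys => d nul b + ged d nul [] ys
  | a :: xs, [] => d nul a + ged d nul xs []
  | a :: xs, b :: ys =>
      min (d a b + ged d nul xs ys)
        (min (d nul a + ged d nul xs (b :: ys)) (d nul b + ged d nul (a :: xs) ys))
  termination_by x y => x.length + y.length

/-- Simple (Hamming/Levenshtein) edit distance: unit-cost insertions, deletions
and substitutions. -/
def edH [DecidableEq α] : List α → List α → ℕ
  | [], ys => ys.length
  | xs, [] => xs.length
  | a :: xs, b :: ys =>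
      min ((if a = b then 0 else 1) + edH xs ys)
        (min (1 + edH xs (b :: ys)) (1 + edH (a :: xs) ys))
  termination_by x y => x.length + y.length

/-- Simple edit distance with only unit-cost insertions and deletions. -/
def edS [DecidableEq α] : List α → List α → ℕ
  | [], ys => ys.length
  | xs, [] => xs.length
  | a :: xs, b :: ys =>
      if a = b then
        min (edS xs ys) (min (1 + edS xs (b :: ys)) (1 + edS (a :: xs) ys))
      else
        min (1 + edS xs (b :: ys)) (1 + edS (a :: xs) ys)
  termination_by x y => x.length + y.length

/-- The padded string `p(x) = ∅ x₁ ∅ x₂ ∅ ⋯ xₙ ∅`. -/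
def pad (nul : α) (x : List α) : List α := nul :: x.flatMap fun a => [a, nul]

/-- The `r`-simplification for edit distance: remove all letters of magnitude at most `r`. -/
noncomputable def sEd [MetricSpace α] (nul : α) (r : ℝ) (x : List α) : List α :=
  x.filter fun l => decide (r < dist nul l)

/-!
Distances are nonnegative, so cutting a pair out of a correspondence never makes it more
expensive. If both sides of the first pair repeat in the next pair, that pair can be cut;
recursively, every correspondence can be shortened to length below `|x| + |y|` at no extra cost,
so the minimum over the finitely many short correspondences is attained and equals `dtw`.
Now take an optimal correspondence of minimal length. If it extended both final runs, deleting
its last pair would leave a correspondence of `x` and `y` that is shorter and no more expensive.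
-/

open List

section Expansion

theorem isExpansion_cons_left {a : α} {x xb : List α} :
    IsExpansion (a :: x) xb ↔ ∃ k u, 0 < k ∧ IsExpansion x u ∧ xb = replicate k a ++ u := by
  constructor
  · rintro ⟨_ | ⟨k, ks⟩, hlen, hpos, rfl⟩
    · simp at hlen
    · exact ⟨k, _, hpos k mem_cons_self,
        ⟨ks, by simpa using hlen, fun k' hk' => hpos k' (mem_cons_of_mem k hk'), rfl⟩, by simp⟩
  · rintro ⟨k, u, hk, ⟨ks, hlen, hpos, rfl⟩, rfl⟩
    refine ⟨k :: ks, by simpa using hlen, ?_, by simp⟩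
    simpa [forall_mem_cons] using ⟨hk, hpos⟩

theorem isExpansion_nil_left {xb : List α} : IsExpansion [] xb ↔ xb = [] := by
  simp [IsExpansion, IsExpansionWith]

theorem isExpansion_nil_right {x : List α} : IsExpansion x [] ↔ x = [] := by
  cases x with
  | nil => exact ⟨fun _ => rfl, fun _ => isExpansion_nil_left.2 rfl⟩
  | cons a x =>
    simp only [isExpansion_cons_left, reduceCtorEq, iff_false, not_exists, not_and]
    intro k u hk _ h
    have := congrArg length h
    simp at this
    omega

theorem isExpansion_cons_cons {a c : α} {x xb : List α} :
    IsExpansion (a :: x) (c :: xb) ↔ c = a ∧ (IsExpansion (a :: x) xb ∨ IsExpansion x xb) := by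
  constructor
  · rw [isExpansion_cons_left]
    rintro ⟨_ | _ | k, u, hk, hu, h⟩
    · omega
    · simp_all
    · simp only [replicate_succ, cons_append, cons.injEq] at h
      exact ⟨h.1, .inl (isExpansion_cons_left.2 ⟨k + 1, u, k.succ_pos, hu, h.2⟩)⟩
  · rintro ⟨rfl, h | h⟩
    · obtain ⟨k, u, hk, hu, rfl⟩ := isExpansion_cons_left.1 h
      exact isExpansion_cons_left.2 ⟨k + 1, u, k.succ_pos, hu, rfl⟩
    · exact isExpansion_cons_left.2 ⟨1, xb, one_pos, h, rfl⟩

theorem isExpansion_refl (x : List α) : IsExpansion x x := by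
  induction x with
  | nil => exact isExpansion_nil_left.2 rfl
  | cons a x ih => exact isExpansion_cons_cons.2 ⟨rfl, .inr ih⟩

theorem IsExpansion.mem {x xb : List α} (h : IsExpansion x xb) {a : α} (ha : a ∈ xb) : a ∈ x := by
  obtain ⟨ks, -, -, rfl⟩ := h
  obtain ⟨p, hp, ha⟩ := mem_flatMap.1 ha
  exact eq_of_mem_replicate ha ▸ of_mem_zip hp |>.1

theorem IsExpansion.append {x y xb yb : List α} (hx : IsExpansion x xb) (hy : IsExpansion y yb) :
    IsExpansion (x ++ y) (xb ++ yb) := by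
  induction x generalizing xb with
  | nil => rwa [isExpansion_nil_left.1 hx]
  | cons a x ih =>
    obtain ⟨k, u, hk, hu, rfl⟩ := isExpansion_cons_left.1 hx
    exact isExpansion_cons_left.2 ⟨k, u ++ yb, hk, ih hu, by simp⟩

theorem IsExpansion.exists_eq_append {x y zb : List α} (h : IsExpansion (x ++ y) zb) :
    ∃ xb yb, IsExpansion x xb ∧ IsExpansion y yb ∧ zb = xb ++ yb := by
  induction x generalizing zb with
  | nil => exact ⟨[], zb, isExpansion_nil_left.2 rfl, h, rfl⟩
  | cons a x ih =>
    obtain ⟨k, u, hk, hu, rfl⟩ := isExpansion_cons_left.1 h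
    obtain ⟨xb, yb, hxb, hyb, rfl⟩ := ih hu
    exact ⟨replicate k a ++ xb, yb, isExpansion_cons_left.2 ⟨k, xb, hk, hxb, rfl⟩, hyb, by simp⟩

theorem isExpansion_replicate_replicate {a : α} {k K : ℕ} (hk : 0 < k) (hkK : k ≤ K) :
    IsExpansion (replicate k a) (replicate K a) := by
  obtain ⟨k, rfl⟩ : ∃ k', k = k' + 1 := ⟨k - 1, by omega⟩
  obtain ⟨j, rfl⟩ : ∃ j, K = j + 1 + k := ⟨K - k - 1, by omega⟩
  refine isExpansion_cons_left.2 ⟨j + 1, replicate k a, j.succ_pos, isExpansion_refl _, ?_⟩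
  rw [replicate_add]

theorem IsExpansion.exists_eq_replicate {a : α} {k : ℕ} {xb : List α}
    (h : IsExpansion (replicate k a) xb) : ∃ K, k ≤ K ∧ xb = replicate K a := by
  induction k generalizing xb with
  | zero => exact ⟨0, le_rfl, isExpansion_nil_left.1 h⟩
  | succ k ih =>
    obtain ⟨j, u, hj, hu, rfl⟩ := isExpansion_cons_left.1 h
    obtain ⟨K, hK, rfl⟩ := ih hu
    exact ⟨j + K, by omega, (replicate_add ..).symm⟩

theorem IsExpansion.getLast? {x xb : List α} (h : IsExpansion x xb) : xb.getLast? = x.getLast? := by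
  induction x generalizing xb with
  | nil => rw [isExpansion_nil_left.1 h]
  | cons a x ih =>
    obtain ⟨k, u, hk, hu, rfl⟩ := isExpansion_cons_left.1 h
    simp [getLast?_append, ih hu, getLast?_replicate, hk.ne', getLast?_cons]

theorem exists_isExpansion_length_eq_mul (x : List α) {c : ℕ} (hc : 0 < c) :
    ∃ xb, IsExpansion x xb ∧ xb.length = c * x.length := by
  induction x with
  | nil => exact ⟨[], isExpansion_nil_left.2 rfl, rfl⟩
  | cons a x ih =>
    obtain ⟨u, hu, hlen⟩ := ih
    exact ⟨replicate c a ++ u, isExpansion_cons_left.2 ⟨c, u, hc, hu, rfl⟩, by simp [hlen]; ring⟩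

theorem finite_setOf_isExpansion_length_le (x : List α) (n : ℕ) :
    {xb | IsExpansion x xb ∧ xb.length ≤ n}.Finite := by
  have : Finite {a // a ∈ x} := x.finite_toSet.to_subtype
  refine ((finite_length_le {a // a ∈ x} n).image (map Subtype.val)).subset ?_
  rintro xb ⟨hxb, hlen⟩
  exact ⟨xb.attach.map fun a => ⟨a.1, hxb.mem a.2⟩, by simpa using hlen, by simp⟩

end Expansion

section LastRun

theorem exists_eq_append_replicate {l : List α} (hl : l ≠ []) :
    ∃ m a k, m.getLast? ≠ some a ∧ 0 < k ∧ l = m ++ replicate k a := by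
  induction l using reverseRecOn with
  | nil => exact absurd rfl hl
  | append_singleton l c ih =>
    by_cases hc : l.getLast? = some c
    · obtain ⟨m, a, k, hm, hk, rfl⟩ := ih (by rintro rfl; simp at hc)
      obtain rfl : a = c := by simpa [getLast?_append, getLast?_replicate, hk.ne'] using hc
      exact ⟨m, a, k + 1, hm, k.succ_pos, by simp [replicate_succ']⟩
    · exact ⟨l, c, 1, hc, one_pos, rfl⟩

variable [DecidableEq α]

theorem lastRunLen_append_replicate {m : List α} {a : α} {k : ℕ} (hm : m.getLast? ≠ some a)
    (hk : 0 < k) : lastRunLen (m ++ replicate k a) = k := by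
  have hrun : (replicate k a).splitBy (· == ·) = [replicate k a] :=
    splitBy_of_isChain (by simp [hk.ne']) (isChain_replicate_of_rel k (by simp))
  rw [lastRunLen, runsOf, splitBy_append, hrun, getLastD_concat, length_replicate]
  intro b hb c hc
  simp_all [head?_replicate, hk.ne']

theorem IsExpansion.dropLast {x xb : List α} (h : IsExpansion x xb)
    (hlast : lastRunLen xb ≠ lastRunLen x) : IsExpansion x xb.dropLast := by
  rcases eq_or_ne x [] with rfl | hx
  · exact absurd (by rw [isExpansion_nil_left.1 h]) hlast
  obtain ⟨m, a, k, hm, hk, rfl⟩ := exists_eq_append_replicate hx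
  obtain ⟨m', K', hm', hK', rfl⟩ := h.exists_eq_append
  obtain ⟨K, hkK, rfl⟩ := hK'.exists_eq_replicate
  have hm'a : m'.getLast? ≠ some a := hm'.getLast? ▸ hm
  rw [lastRunLen_append_replicate hm hk, lastRunLen_append_replicate hm'a (hk.trans_le hkK)] at hlast
  obtain ⟨K, rfl⟩ : ∃ j, K = j + 1 := ⟨K - 1, by omega⟩
  rw [replicate_succ', ← append_assoc, dropLast_concat]
  exact hm'.append (isExpansion_replicate_replicate hk (by omega))

end LastRun

section Cost

variable {d : α → α → ℝ}

theorem corrCost_cons (a b : α) (xb yb : List α) :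
    corrCost d (a :: xb) (b :: yb) = d a b + corrCost d xb yb := by
  simp [corrCost]

theorem corrCost_nonneg (hd : ∀ a b, 0 ≤ d a b) (xb yb : List α) : 0 ≤ corrCost d xb yb :=
  sum_nonneg <| forall_mem_map.2 fun _ _ => hd _ _

theorem corrCost_take_le (hd : ∀ a b, 0 ≤ d a b) (n : ℕ) (xb yb : List α) :
    corrCost d (xb.take n) (yb.take n) ≤ corrCost d xb yb := by
  have hsub : (xb.take n).zip (yb.take n) <+ xb.zip yb := by
    rw [zip_eq_zipWith, zip_eq_zipWith, ← take_zipWith]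
    exact (take_prefix _ _).sublist
  exact (hsub.map _).sum_le_sum <| forall_mem_map.2 fun _ _ => hd _ _

end Cost

section Correspondence

variable {d : α → α → ℝ} {x y xb yb : List α}

theorem IsCorrespondence.exists_length_le (hd : ∀ a b, 0 ≤ d a b)
    (h : IsCorrespondence x y xb yb) :
    ∃ xb' yb', IsCorrespondence x y xb' yb' ∧ corrCost d xb' yb' ≤ corrCost d xb yb ∧
      xb'.length ≤ x.length + y.length - 1 := by
  induction xb generalizing x y yb with
  | nil => exact ⟨[], yb, h, le_rfl, Nat.zero_le _⟩
  | cons c xb ih =>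
    obtain ⟨hxb, hyb, hlen⟩ := h
    obtain ⟨e, yb, rfl⟩ := exists_cons_of_length_eq_add_one hlen.symm
    cases x with
    | nil => simp [isExpansion_nil_left] at hxb
    | cons a x =>
    cases y with
    | nil => simp [isExpansion_nil_left] at hyb
    | cons b y =>
    obtain ⟨rfl, hxb⟩ := isExpansion_cons_cons.1 hxb
    obtain ⟨rfl, hyb⟩ := isExpansion_cons_cons.1 hyb
    have hlen : xb.length = yb.length := by simpa using hlen
    -- If both sides repeat their first letter, drop the first pair; otherwise shrink the rest.
    rcases hxb with hxb | hxb <;> rcases hyb with hyb | hyb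
    · obtain ⟨xb', yb', h', hcost, hN⟩ := ih ⟨hxb, hyb, hlen⟩
      refine ⟨xb', yb', h', hcost.trans ?_, hN⟩
      rw [corrCost_cons]
      exact le_add_of_nonneg_left (hd c e)
    all_goals
      obtain ⟨xb', yb', ⟨hxb', hyb', hlen'⟩, hcost, hN⟩ := ih ⟨hxb, hyb, hlen⟩
      refine ⟨c :: xb', e :: yb', ⟨isExpansion_cons_cons.2 ⟨rfl, by tauto⟩,
        isExpansion_cons_cons.2 ⟨rfl, by tauto⟩, by simp [hlen']⟩, ?_, ?_⟩
      · rw [corrCost_cons, corrCost_cons]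
        gcongr
      · simp only [length_cons] at hN ⊢
        omega

theorem exists_isCorrespondence (hx : x ≠ []) (hy : y ≠ []) :
    ∃ xb yb, IsCorrespondence x y xb yb := by
  obtain ⟨xb, hxb, hxl⟩ := exists_isExpansion_length_eq_mul x (length_pos_iff.2 hy)
  obtain ⟨yb, hyb, hyl⟩ := exists_isExpansion_length_eq_mul y (length_pos_iff.2 hx)
  exact ⟨xb, yb, hxb, hyb, by rw [hxl, hyl, mul_comm]⟩

theorem dtw_le_corrCost (hd : ∀ a b, 0 ≤ d a b) (h : IsCorrespondence x y xb yb) :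
    dtw d x y ≤ corrCost d xb yb :=
  csInf_le ⟨0, by rintro _ ⟨xb, yb, -, rfl⟩; exact corrCost_nonneg hd xb yb⟩ ⟨xb, yb, h, rfl⟩

theorem exists_isCorrespondence_corrCost_eq_dtw (hd : ∀ a b, 0 ≤ d a b) (hx : x ≠ [])
    (hy : y ≠ []) : ∃ xb yb, IsCorrespondence x y xb yb ∧ corrCost d xb yb = dtw d x y := by
  set N := x.length + y.length - 1
  set short := {p : List α × List α | IsCorrespondence x y p.1 p.2 ∧ p.1.length ≤ N}
  have hfin : short.Finite :=
    ((finite_setOf_isExpansion_length_le x N).prod (finite_setOf_isExpansion_length_le y N)).subset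
      fun p ⟨⟨hxb, hyb, hlen⟩, hN⟩ => ⟨⟨hxb, hN⟩, hyb, hlen ▸ hN⟩
  have hshort : ∀ {xb yb}, IsCorrespondence x y xb yb →
      ∃ p ∈ short, corrCost d p.1 p.2 ≤ corrCost d xb yb := fun h =>
    let ⟨xb', yb', h', hcost, hlen⟩ := h.exists_length_le hd
    ⟨(xb', yb'), ⟨h', hlen⟩, hcost⟩
  obtain ⟨xb₀, yb₀, h₀⟩ := exists_isCorrespondence hx hy
  obtain ⟨p, ⟨hp, -⟩, hmin⟩ := short.exists_min_image (fun p => corrCost d p.1 p.2) hfin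
    (by obtain ⟨p, hp, -⟩ := hshort h₀; exact ⟨p, hp⟩)
  have hleast : IsLeast {c | ∃ xb yb, IsCorrespondence x y xb yb ∧ c = corrCost d xb yb}
      (corrCost d p.1 p.2) := by
    refine ⟨⟨p.1, p.2, hp, rfl⟩, ?_⟩
    rintro _ ⟨xb, yb, h, rfl⟩
    obtain ⟨q, hq, hle⟩ := hshort h
    exact (hmin q hq).trans hle
  exact ⟨p.1, p.2, hp, hleast.csInf_eq.symm⟩

theorem IsCorrespondence.dropLast [DecidableEq α] (h : IsCorrespondence x y xb yb)
    (hx : lastRunLen xb ≠ lastRunLen x) (hy : lastRunLen yb ≠ lastRunLen y) :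
    IsCorrespondence x y xb.dropLast yb.dropLast :=
  ⟨h.1.dropLast hx, h.2.1.dropLast hy, by simp [h.2.2]⟩

end Correspondence

/-- There is an optimal correspondence in which either the final run of `x` or
the final run of `y` is not extended. -/
theorem stmt2 [MetricSpace α] [DecidableEq α] (x y : List α)
    (hx : x ≠ []) (hy : y ≠ []) :
    ∃ xb yb : List α, IsCorrespondence x y xb yb ∧
      corrCost dist xb yb = dtw dist x y ∧
      (lastRunLen xb = lastRunLen x ∨ lastRunLen yb = lastRunLen y) := by
  classical
  have hd : ∀ a b : α, 0 ≤ dist a b := fun _ _ => dist_nonneg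
  have hopt : ∃ n, ∃ xb yb, IsCorrespondence x y xb yb ∧
      corrCost dist xb yb = dtw dist x y ∧ xb.length = n := by
    obtain ⟨xb, yb, h, hcost⟩ := exists_isCorrespondence_corrCost_eq_dtw hd hx hy
    exact ⟨_, xb, yb, h, hcost, rfl⟩
  obtain ⟨xb, yb, h, hcost, hlen⟩ := Nat.find_spec hopt
  refine ⟨xb, yb, h, hcost, ?_⟩
  by_contra! hlast
  have h' := h.dropLast hlast.1 hlast.2
  have hcost' : corrCost dist xb.dropLast yb.dropLast = dtw dist x y := by
    refine le_antisymm ?_ (dtw_le_corrCost hd h')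
    rw [← hcost, dropLast_eq_take, dropLast_eq_take, h.2.2]
    exact corrCost_take_le hd _ _ _
  have hxb : xb ≠ [] := fun hxb => hx (isExpansion_nil_right.1 (hxb ▸ h.1))
  refine Nat.find_min hopt ?_ ⟨_, _, h', hcost', rfl⟩
  rw [length_dropLast, ← hlen]
  exact Nat.sub_lt (length_pos_iff.2 hxb) one_pos
end

section
/- Let (Σ ∪ {∅}, d) be a metric space with magnitudes |l| = d(∅, l) ≥ 1 for all l ∈ Σ, let R ≥ 1, and let r be drawn uniformly at random from [R, 2R]. Let s_r(x) remove all letters of magnitude at most r. Then for any x, y ∈ Σⁿ, E[ed(s_r(x), s_r(y))] ≤ 5·ed(x, y). -/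
open scoped BigOperators

variable {α : Type*}

/-! An edit script for `x, y` is simulated operation by operation on `s_r x, s_r y`: `ged` is
subadditive under concatenation and `s_r` commutes with it, so it suffices to bound, on average over
`r ∈ [R, 2R]`, the cost of a single operation. A deletion of `l` costs at most `|l|`. A substitution of
`l₁` by `l₂` costs `d(l₁, l₂)` unless `r` lies between `|l₁|` and `|l₂|`; then only the larger one
survives, at cost at most `2R + d(l₁, l₂)`, and by the triangle inequality this happens for `r` in a set
of measure at most `min(R, d(l₁, l₂))`. Integrating gives `4R·d(l₁, l₂)`. -/

section GenEditDistance

variable (d : α → α → ℝ) (nul : α)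

theorem ged_cons_cons_le (a b : α) (xs ys : List α) :
    ged d nul (a :: xs) (b :: ys) ≤ d a b + ged d nul xs ys := by
  rw [ged]
  exact min_le_left _ _

theorem ged_cons_left_le (a : α) (xs : List α) :
    ∀ ys, ged d nul (a :: xs) ys ≤ d nul a + ged d nul xs ys
  | [] => by rw [ged]
  | b :: ys => by rw [ged]; exact (min_le_right _ _).trans (min_le_left _ _)

theorem ged_cons_right_le (b : α) (ys : List α) :
    ∀ xs, ged d nul xs (b :: ys) ≤ d nul b + ged d nul xs ys
  | [] => by rw [ged]
  | a :: xs => by rw [ged]; exact (min_le_right _ _).trans (min_le_right _ _)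

theorem ged_nonneg (hd : ∀ a b, 0 ≤ d a b) : ∀ x y : List α, 0 ≤ ged d nul x y
  | [], [] => by simp [ged]
  | [], b :: ys => by rw [ged]; exact add_nonneg (hd _ _) (ged_nonneg hd [] ys)
  | a :: xs, [] => by rw [ged]; exact add_nonneg (hd _ _) (ged_nonneg hd xs [])
  | a :: xs, b :: ys => by
    rw [ged]
    exact le_min (add_nonneg (hd _ _) (ged_nonneg hd xs ys))
      (le_min (add_nonneg (hd _ _) (ged_nonneg hd xs (b :: ys)))
        (add_nonneg (hd _ _) (ged_nonneg hd (a :: xs) ys)))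

theorem ged_le_sum_add_sum : ∀ x y : List α,
    ged d nul x y ≤ (x.map (d nul)).sum + (y.map (d nul)).sum
  | [], [] => by simp [ged]
  | [], b :: ys => by
    have := ged_le_sum_add_sum [] ys
    simp only [ged, List.map_cons, List.sum_cons, List.map_nil, List.sum_nil] at this ⊢
    linarith
  | a :: xs, y => by
    have := ged_le_sum_add_sum xs y
    have := ged_cons_left_le d nul a xs y
    simp only [List.map_cons, List.sum_cons]
    linarith

theorem ged_append_le : ∀ u v u' v' : List α,
    ged d nul (u ++ u') (v ++ v') ≤ ged d nul u v + ged d nul u' v'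
  | [], [], u', v' => by simp [ged]
  | [], b :: vs, u', v' => by
    have := ged_append_le [] vs u' v'
    have := ged_cons_right_le d nul b (vs ++ v') u'
    rw [ged]
    simp only [List.nil_append, List.cons_append] at *
    linarith
  | a :: us, [], u', v' => by
    have := ged_append_le us [] u' v'
    have := ged_cons_left_le d nul a (us ++ u') v'
    rw [ged]
    simp only [List.nil_append, List.cons_append] at *
    linarith
  | a :: us, b :: vs, u', v' => by
    have hsub := ged_append_le us vs u' v'
    have hdelL := ged_append_le us (b :: vs) u' v'
    have hdelR := ged_append_le (a :: us) vs u' v'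
    rw [ged, ← min_add_add_right, ← min_add_add_right]
    simp only [List.cons_append] at *
    refine le_min ?_ (le_min ?_ ?_)
    · linarith [ged_cons_cons_le d nul a b (us ++ u') (vs ++ v')]
    · linarith [ged_cons_left_le d nul a (us ++ u') (b :: (vs ++ v'))]
    · linarith [ged_cons_right_le d nul b (vs ++ v') (a :: (us ++ u'))]

end GenEditDistance

section IndicatorIntegral

open MeasureTheory Set

theorem intervalIntegrable_indicator_const {s : Set ℝ} (hs : MeasurableSet s) (c p q : ℝ) :
    IntervalIntegrable (s.indicator fun _ => c) volume p q := by
  rw [intervalIntegrable_iff]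
  exact IntegrableOn.indicator (integrableOn_const measure_Ioc_lt_top.ne) hs

theorem integral_indicator_Ico_le {R : ℝ} (hR : 0 ≤ R) (A B : ℝ) :
    ∫ r in R..(2 * R), (Ico A B).indicator (fun _ => B) r ≤ 3 * R * max (B - A) 0 := by
  have hRR : R ≤ 2 * R := by linarith
  set χ : ℝ → ℝ := (Ico A B).indicator 1
  have hχ : IntervalIntegrable χ volume R (2 * R) :=
    intervalIntegrable_indicator_const measurableSet_Ico _ _ _
  have hpt : ∀ r ∈ Icc R (2 * R),
      (Ico A B).indicator (fun _ => B) r ≤ 2 * R * χ r + max (B - A) 0 := by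
    intro r hr
    by_cases hAB : r ∈ Ico A B
    · simp only [χ, indicator_of_mem hAB, Pi.one_apply]
      linarith [hAB.1, hr.2, le_max_left (B - A) 0]
    · simp only [χ, indicator_of_notMem hAB]
      linarith [le_max_right (B - A) 0]
  have hvol : ∫ r in R..(2 * R), χ r ≤ max (B - A) 0 := by
    rw [intervalIntegral.integral_of_le hRR, integral_indicator_one measurableSet_Ico,
      measureReal_restrict_apply measurableSet_Ico, ← Real.volume_real_Ico]
    exact measureReal_mono inter_subset_left measure_Ico_lt_top.ne
  calc ∫ r in R..(2 * R), (Ico A B).indicator (fun _ => B) r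
      ≤ ∫ r in R..(2 * R), (2 * R * χ r + max (B - A) 0) :=
        intervalIntegral.integral_mono_on hRR
          (intervalIntegrable_indicator_const measurableSet_Ico _ _ _)
          ((hχ.const_mul _).add intervalIntegrable_const) hpt
    _ = 2 * R * (∫ r in R..(2 * R), χ r) + R * max (B - A) 0 := by
        rw [intervalIntegral.integral_add (hχ.const_mul _) intervalIntegrable_const,
          intervalIntegral.integral_const_mul, intervalIntegral.integral_const, smul_eq_mul]
        ring
    _ ≤ 3 * R * max (B - A) 0 := by
        linarith [mul_le_mul_of_nonneg_left hvol (by linarith : 0 ≤ 2 * R)]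

end IndicatorIntegral

section Simplification

open MeasureTheory Set

variable [MetricSpace α] (nul : α) {R : ℝ}

theorem sEd_append (r : ℝ) (u v : List α) : sEd nul r (u ++ v) = sEd nul r u ++ sEd nul r v :=
  List.filter_append ..

theorem sum_map_dist_sEd_le (r : ℝ) (x : List α) :
    ((sEd nul r x).map (dist nul)).sum ≤ (x.map (dist nul)).sum :=
  ((List.filter_sublist (l := x)).map _).sum_le_sum <| by
    simp only [List.mem_map]
    rintro _ ⟨l, -, rfl⟩
    exact dist_nonneg

theorem measurable_sEd_comp {β : Type*} [MeasurableSpace β] :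
    ∀ (x : List α) (Φ : ℝ → List α → β), (∀ l, Measurable (Φ · l)) →
      Measurable fun r => Φ r (sEd nul r x)
  | [], _, hΦ => hΦ []
  | a :: xs, Φ, hΦ => by
    have hsplit : (fun r => Φ r (sEd nul r (a :: xs))) = fun r =>
        if r < dist nul a then Φ r (a :: sEd nul r xs) else Φ r (sEd nul r xs) := by
      funext r
      by_cases h : r < dist nul a <;> simp [sEd, h]
    rw [hsplit]
    exact Measurable.ite (measurableSet_lt measurable_id measurable_const)
      (measurable_sEd_comp xs (fun r l => Φ r (a :: l)) fun l => hΦ (a :: l))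
      (measurable_sEd_comp xs Φ hΦ)

theorem intervalIntegrable_ged_sEd (x y : List α) (p q : ℝ) :
    IntervalIntegrable (fun r => ged dist nul (sEd nul r x) (sEd nul r y)) volume p q := by
  have hmeas : Measurable fun r => ged dist nul (sEd nul r x) (sEd nul r y) :=
    measurable_sEd_comp nul y _ fun l =>
      measurable_sEd_comp nul x (fun _ u => ged dist nul u l) fun _ => measurable_const
  refine (intervalIntegrable_const (c := (x.map (dist nul)).sum + (y.map (dist nul)).sum)).mono_fun
    hmeas.aestronglyMeasurable (Filter.Eventually.of_forall fun r => ?_)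
  have hnonneg := ged_nonneg dist nul (fun a b : α => dist_nonneg (x := a) (y := b))
    (sEd nul r x) (sEd nul r y)
  have hsum := ged_le_sum_add_sum dist nul (sEd nul r x) (sEd nul r y)
  have hx := sum_map_dist_sEd_le nul r x
  have hy := sum_map_dist_sEd_le nul r y
  dsimp only
  rw [Real.norm_of_nonneg hnonneg, Real.norm_of_nonneg (by linarith)]
  linarith

theorem ged_sEd_singleton_le (r : ℝ) (a b : α) :
    ged dist nul (sEd nul r [a]) (sEd nul r [b]) ≤ dist a b
      + (Ico (dist nul b) (dist nul a)).indicator (fun _ => dist nul a) r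
      + (Ico (dist nul a) (dist nul b)).indicator (fun _ => dist nul b) r := by
  have h₁ : 0 ≤ (Ico (dist nul b) (dist nul a)).indicator (fun _ => dist nul a) r :=
    indicator_nonneg (fun _ _ => dist_nonneg) r
  have h₂ : 0 ≤ (Ico (dist nul a) (dist nul b)).indicator (fun _ => dist nul b) r :=
    indicator_nonneg (fun _ _ => dist_nonneg) r
  by_cases ha : r < dist nul a <;> by_cases hb : r < dist nul b
  · simp only [sEd, List.filter_singleton, ha, hb, decide_true, cond_true]
    linarith [ged_cons_cons_le dist nul a b [] [], ged.eq_1 dist nul]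
  · have hmem : r ∈ Ico (dist nul b) (dist nul a) := ⟨not_lt.mp hb, ha⟩
    simp only [sEd, List.filter_singleton, ha, hb, decide_true, decide_false, cond_true,
      cond_false, indicator_of_mem hmem]
    linarith [ged_cons_left_le dist nul a [] [], ged.eq_1 dist nul, dist_nonneg (x := a) (y := b)]
  · have hmem : r ∈ Ico (dist nul a) (dist nul b) := ⟨not_lt.mp ha, hb⟩
    simp only [sEd, List.filter_singleton, ha, hb, decide_true, decide_false, cond_true,
      cond_false, indicator_of_mem hmem]
    linarith [ged_cons_right_le dist nul b [] [], ged.eq_1 dist nul, dist_nonneg (x := a) (y := b)]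
  · simp only [sEd, List.filter_singleton, ha, hb, decide_false, cond_false]
    linarith [ged.eq_1 dist nul, dist_nonneg (x := a) (y := b)]

theorem integral_ged_sEd_append_le (p q : ℝ) (hpq : p ≤ q) (u v u' v' : List α) :
    ∫ r in p..q, ged dist nul (sEd nul r (u ++ u')) (sEd nul r (v ++ v'))
      ≤ (∫ r in p..q, ged dist nul (sEd nul r u) (sEd nul r v))
        + ∫ r in p..q, ged dist nul (sEd nul r u') (sEd nul r v') := by
  rw [← intervalIntegral.integral_add (intervalIntegrable_ged_sEd nul u v p q)
    (intervalIntegrable_ged_sEd nul u' v' p q)]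
  refine intervalIntegral.integral_mono hpq (intervalIntegrable_ged_sEd nul _ _ p q)
    ((intervalIntegrable_ged_sEd nul u v p q).add (intervalIntegrable_ged_sEd nul u' v' p q))
    fun r => ?_
  simp only [sEd_append]
  exact ged_append_le dist nul _ _ _ _

theorem integral_ged_sEd_le_sum (hR : 0 ≤ R) (x y : List α) :
    ∫ r in R..(2 * R), ged dist nul (sEd nul r x) (sEd nul r y)
      ≤ R * ((x.map (dist nul)).sum + (y.map (dist nul)).sum) := by
  have hbound := intervalIntegral.integral_mono (by linarith : R ≤ 2 * R)
    (intervalIntegrable_ged_sEd nul x y R (2 * R)) intervalIntegrable_const fun r =>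
      (ged_le_sum_add_sum dist nul (sEd nul r x) (sEd nul r y)).trans
        (add_le_add (sum_map_dist_sEd_le nul r x) (sum_map_dist_sEd_le nul r y))
  rw [intervalIntegral.integral_const, smul_eq_mul] at hbound
  linarith

theorem integral_ged_sEd_singleton_le (hR : 0 ≤ R) (a b : α) :
    ∫ r in R..(2 * R), ged dist nul (sEd nul r [a]) (sEd nul r [b]) ≤ 4 * R * dist a b := by
  set A := dist nul a
  set B := dist nul b
  have hIco : ∀ {s t : ℝ}, IntervalIntegrable ((Ico s t).indicator fun _ => t) volume R (2 * R) :=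
    intervalIntegrable_indicator_const measurableSet_Ico _ _ _
  have hmono := intervalIntegral.integral_mono (by linarith : R ≤ 2 * R)
    (intervalIntegrable_ged_sEd nul [a] [b] R (2 * R))
    ((intervalIntegrable_const.add hIco).add hIco) (ged_sEd_singleton_le nul · a b)
  rw [intervalIntegral.integral_add (intervalIntegrable_const.add hIco) hIco,
    intervalIntegral.integral_add intervalIntegrable_const hIco, intervalIntegral.integral_const,
    smul_eq_mul] at hmono
  have hBA := integral_indicator_Ico_le hR B A
  have hAB := integral_indicator_Ico_le hR A B
  have hmag : |A - B| ≤ dist a b := by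
    simpa only [A, B, dist_comm nul] using abs_dist_sub_le a b nul
  have hpos : max (A - B) 0 + max (B - A) 0 = |A - B| := by
    rcases le_total A B with h | h
    · rw [max_eq_right (by linarith), max_eq_left (by linarith), abs_of_nonpos (by linarith)]; ring
    · rw [max_eq_left (by linarith), max_eq_right (by linarith), abs_of_nonneg (by linarith)]; ring
  nlinarith [mul_le_mul_of_nonneg_left hmag hR]

theorem integral_ged_sEd_cons_cons_le (hR : 0 ≤ R) (a b : α) (xs ys : List α) :
    ∫ r in R..(2 * R), ged dist nul (sEd nul r (a :: xs)) (sEd nul r (b :: ys))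
      ≤ 4 * R * dist a b + ∫ r in R..(2 * R), ged dist nul (sEd nul r xs) (sEd nul r ys) := by
  have hsplit := integral_ged_sEd_append_le nul R (2 * R) (by linarith) [a] [b] xs ys
  simp only [List.singleton_append] at hsplit
  linarith [integral_ged_sEd_singleton_le nul hR a b]

theorem integral_ged_sEd_cons_left_le (hR : 0 ≤ R) (a : α) (xs ys : List α) :
    ∫ r in R..(2 * R), ged dist nul (sEd nul r (a :: xs)) (sEd nul r ys)
      ≤ R * dist nul a + ∫ r in R..(2 * R), ged dist nul (sEd nul r xs) (sEd nul r ys) := by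
  have hsplit := integral_ged_sEd_append_le nul R (2 * R) (by linarith) [a] [] xs ys
  have ha := integral_ged_sEd_le_sum nul hR [a] []
  simp only [List.nil_append, List.singleton_append, List.map_nil, List.map_cons,
    List.sum_nil, List.sum_cons, add_zero] at hsplit ha
  linarith

theorem integral_ged_sEd_cons_right_le (hR : 0 ≤ R) (b : α) (xs ys : List α) :
    ∫ r in R..(2 * R), ged dist nul (sEd nul r xs) (sEd nul r (b :: ys))
      ≤ R * dist nul b + ∫ r in R..(2 * R), ged dist nul (sEd nul r xs) (sEd nul r ys) := by
  have hsplit := integral_ged_sEd_append_le nul R (2 * R) (by linarith) [] [b] xs ys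
  have hb := integral_ged_sEd_le_sum nul hR [] [b]
  simp only [List.nil_append, List.singleton_append, List.map_nil, List.map_cons,
    List.sum_nil, List.sum_cons, add_zero, zero_add] at hsplit hb
  linarith

theorem integral_ged_sEd_le (hR : 0 ≤ R) : ∀ x y : List α,
    ∫ r in R..(2 * R), ged dist nul (sEd nul r x) (sEd nul r y) ≤ 5 * R * ged dist nul x y
  | [], [] => by simp [sEd, ged]
  | [], b :: ys => by
    rw [ged]
    linarith [integral_ged_sEd_cons_right_le nul hR b [] ys, integral_ged_sEd_le hR [] ys,
      mul_nonneg hR (dist_nonneg (x := nul) (y := b))]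
  | a :: xs, [] => by
    rw [ged]
    linarith [integral_ged_sEd_cons_left_le nul hR a xs [], integral_ged_sEd_le hR xs [],
      mul_nonneg hR (dist_nonneg (x := nul) (y := a))]
  | a :: xs, b :: ys => by
    have hR5 : 0 ≤ 5 * R := by linarith
    rw [ged, mul_min_of_nonneg _ _ hR5, mul_min_of_nonneg _ _ hR5]
    refine le_min ?_ (le_min ?_ ?_)
    · linarith [integral_ged_sEd_cons_cons_le nul hR a b xs ys, integral_ged_sEd_le hR xs ys,
        mul_nonneg hR (dist_nonneg (x := a) (y := b))]
    · linarith [integral_ged_sEd_cons_left_le nul hR a xs (b :: ys),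
        integral_ged_sEd_le hR xs (b :: ys), mul_nonneg hR (dist_nonneg (x := nul) (y := a))]
    · linarith [integral_ged_sEd_cons_right_le nul hR b (a :: xs) ys,
        integral_ged_sEd_le hR (a :: xs) ys, mul_nonneg hR (dist_nonneg (x := nul) (y := b))]

end Simplification

theorem stmt13_general [MetricSpace α] (nul : α) (R : ℝ) (hR : 1 ≤ R) (x y : List α) :
    (∫ r in R..(2 * R), ged dist nul (sEd nul r x) (sEd nul r y)) / R ≤
      5 * ged dist nul x y := by
  rw [div_le_iff₀ (by linarith)]
  linarith [integral_ged_sEd_le nul (by linarith : 0 ≤ R) x y]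

/-- For `r` uniform in `[R, 2R]`, `E[ed(s_r(x), s_r(y))] ≤ 5 · ed(x, y)`. -/
theorem stmt13 [MetricSpace α] (nul : α) (R : ℝ) (hR : 1 ≤ R) (n : ℕ)
    (x y : List α) (hx : x.length = n) (hy : y.length = n)
    (hmx : ∀ l ∈ x, 1 ≤ dist nul l) (hmy : ∀ l ∈ y, 1 ≤ dist nul l) :
    (∫ r in R..(2 * R), ged dist nul (sEd nul r x) (sEd nul r y)) / R ≤
      5 * ged dist nul x y :=
  stmt13_general nul R hR x y
end
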